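/- Call a submonoid F of a commutative monoid P a face if a + b ∈ F implies a, b ∈ F. Then a submonoid F ⊆ ℕⁿ is a face of ℕⁿ if and only if F = φ⁻¹(0) for some monoid homomorphism φ : ℕⁿ → ℕ. -/
import Mathlib
open Classical in


/-- A submonoid F of ℕⁿ is a face iff it is the kernel of a monoid homomorphism
ℕⁿ → ℕ. -/
theorem face_iff_kernel (n : ℕ) (F : AddSubmonoid (Fin n → ℕ)) :
    (∀ a b : Fin n → ℕ, a + b ∈ F → a ∈ F ∧ b ∈ F) ↔
    ∃ φ : (Fin n → ℕ) →+ ℕ, ∀ x : Fin n → ℕ, x ∈ F ↔ φ x = 0 := by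
  constructor
  · intro hF
    refine ⟨⟨⟨fun x => ∑ i, if Pi.single i 1 ∈ F then 0 else x i, by simp⟩, ?_⟩, ?_⟩
    · intro a b
      dsimp only
      rw [← Finset.sum_add_distrib]
      refine Finset.sum_congr rfl fun i _ => ?_
      by_cases h : Pi.single i 1 ∈ F <;> simp [h, Pi.add_apply]
    · intro x
      simp only [AddMonoidHom.coe_mk, ZeroHom.coe_mk, Finset.sum_eq_zero_iff, Finset.mem_univ,
        forall_true_left]
      constructor
      · intro hx i
        by_cases h : Pi.single i 1 ∈ F
        · simp [h]
        · simp only [h, if_neg, if_false]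
          by_contra hxi
          apply h
          have hx1 : 1 ≤ x i := Nat.one_le_iff_ne_zero.mpr hxi
          have : x = Pi.single i 1 + (x - Pi.single i 1) := by
            funext j
            by_cases hj : j = i
            · subst hj; simp [Pi.single_apply, Nat.add_sub_cancel' hx1]
            · simp [Pi.single_apply, hj]
          exact (hF _ _ (this ▸ hx)).1
      · intro h
        have hx : x = ∑ i, Pi.single i (x i) := (Finset.univ_sum_single x).symm
        rw [hx]
        apply AddSubmonoid.sum_mem
        intro i _
        by_cases hi : Pi.single i 1 ∈ F
        · have : (Pi.single i (x i) : Fin n → ℕ) = x i • Pi.single i 1 := by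
            funext j; by_cases hj : j = i <;> simp [Pi.single_apply, hj]
          rw [this]
          exact AddSubmonoid.nsmul_mem F hi _
        · have := h i
          simp only [hi, if_false] at this
          simpa [this] using zero_mem F
  · rintro ⟨φ, hφ⟩ a b hab
    rw [hφ] at hab
    rw [map_add] at hab
    constructor <;> rw [hφ] <;> omega
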